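/- The characteristic-2 counterexample (Remark after Theorem 7.2): Let A = 𝔽₂[X]/(X²) over 𝔽₂, with x the class of X. Define the 𝔽₂-bilinear map μ₂ : A × A → A by μ₂(x,x) = 1 and μ₂(1,1) = μ₂(1,x) = μ₂(x,1) = 0, and set μ_n = 0 for all n ≥ 1 with n ≠ 2. Then: (i) (μ_n)_{n≥0} (with μ₀ the multiplication of A) is a formal one-parameter deformation of A; (ii) it is equivalent to the trivial deformation (μ'_n = 0 for n ≥ 1) via the formal automorphism given by φ₀ = id, φ₁(1) = 0, φ₁(x) = 1, and φ_n = 0 for n ≥ 2; (iii) μ₂ is a Hochschild 2-cocycle of A which is not a Hochschild coboundary. Hence over a field of characteristic 2 a trivial formal deformation can begin with a Hochschild cocycle not cohomologous to zero. -/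
import Mathlib

set_option maxHeartbeats 1000000
set_option synthInstance.maxHeartbeats 400000


/-- The algebra `𝔽₂[X]/(X²)`, realized as the dual numbers over `ZMod 2`;
`x` (the class of `X`) is `DualNumber.eps`. -/
abbrev A₂ : Type := DualNumber (ZMod 2)

/-- A formal one-parameter deformation of a unital associative algebra `A` over `ZMod 2`. -/
def IsFormalDeformation (A : Type*) [Ring A] [Algebra (ZMod 2) A]
    (μ : ℕ → A →ₗ[ZMod 2] A →ₗ[ZMod 2] A) : Prop :=
  (∀ a b : A, μ 0 a b = a * b) ∧
  (∀ n : ℕ, 1 ≤ n → ∀ a : A, μ n 1 a = 0 ∧ μ n a 1 = 0) ∧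
  (∀ k : ℕ, 1 ≤ k → ∀ a b c : A,
    ∑ i ∈ Finset.range (k + 1), μ i (μ (k - i) a b) c =
    ∑ i ∈ Finset.range (k + 1), μ i a (μ (k - i) b c))

/-- `φ` is a formal automorphism giving an equivalence from `μ'` to `μ`. -/
def IsEquivalenceOfDeformations (A : Type*) [Ring A] [Algebra (ZMod 2) A]
    (φ : ℕ → A →ₗ[ZMod 2] A) (μ' μ : ℕ → A →ₗ[ZMod 2] A →ₗ[ZMod 2] A) : Prop :=
  φ 0 = LinearMap.id ∧
  (∀ n : ℕ, 1 ≤ n → φ n 1 = 0) ∧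
  (∀ (k : ℕ) (a b : A),
    ∑ i ∈ Finset.range (k + 1), φ i (μ' (k - i) a b) =
    ∑ i ∈ Finset.range (k + 1), ∑ j ∈ Finset.range (k - i + 1),
      μ i (φ j a) (φ (k - i - j) b))

/-- Hochschild 2-cocycle condition. -/
def IsHochschildCocycle (A : Type*) [Ring A] [Algebra (ZMod 2) A]
    (m : A →ₗ[ZMod 2] A →ₗ[ZMod 2] A) : Prop :=
  ∀ a b c : A, a * m b c - m (a * b) c + m a (b * c) - m a b * c = 0

/-- Hochschild 2-coboundary condition. -/
def IsHochschildCoboundary (A : Type*) [Ring A] [Algebra (ZMod 2) A]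
    (m : A →ₗ[ZMod 2] A →ₗ[ZMod 2] A) : Prop :=
  ∃ ξ : A →ₗ[ZMod 2] A, ∀ a b : A, m a b = a * ξ b - ξ (a * b) + ξ a * b

/-- The bilinear map `μ₂` with `μ₂(x,x) = 1`, `μ₂(1,1) = μ₂(1,x) = μ₂(x,1) = 0`. -/
def mu2 : A₂ →ₗ[ZMod 2] A₂ →ₗ[ZMod 2] A₂ :=
  LinearMap.mk₂ (ZMod 2) (fun p q => (p.snd * q.snd) • (1 : A₂))
    (by intros; simp [add_mul, add_smul])
    (by intros; simp [smul_eq_mul, mul_assoc, mul_smul])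
    (by intros; simp [mul_add, add_smul])
    (by intros; simp [smul_eq_mul, mul_smul, mul_left_comm])

/-- The deformation `μ` with `μ₀` the multiplication, the above `μ₂`, and `μ_n = 0`
otherwise. -/
noncomputable def muDef : ℕ → A₂ →ₗ[ZMod 2] A₂ →ₗ[ZMod 2] A₂ := fun n =>
  if n = 0 then LinearMap.mul (ZMod 2) A₂ else if n = 2 then mu2 else 0

/-- The trivial deformation. -/
noncomputable def muTriv : ℕ → A₂ →ₗ[ZMod 2] A₂ →ₗ[ZMod 2] A₂ := fun n =>
  if n = 0 then LinearMap.mul (ZMod 2) A₂ else 0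

/-- The linear map `φ₁` with `φ₁(1) = 0` and `φ₁(x) = 1`. -/
def phi1 : A₂ →ₗ[ZMod 2] A₂ :=
  (Algebra.linearMap (ZMod 2) A₂).comp (TrivSqZeroExt.sndHom (ZMod 2) (ZMod 2))

/-- The formal automorphism `φ₀ = id`, `φ₁` as above, `φ_n = 0` for `n ≥ 2`. -/
def phiDef : ℕ → A₂ →ₗ[ZMod 2] A₂ := fun n =>
  if n = 0 then LinearMap.id else if n = 1 then phi1 else 0

lemma mu2_apply (a b : A₂) : mu2 a b = (a.snd * b.snd) • (1 : A₂) := rfl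

lemma muDef_zero : muDef 0 = LinearMap.mul (ZMod 2) A₂ := rfl
lemma muDef_one : muDef 1 = 0 := rfl
lemma muDef_two : muDef 2 = mu2 := rfl
lemma muDef_three : muDef 3 = 0 := rfl
lemma muDef_four : muDef 4 = 0 := rfl
lemma muTriv_zero : muTriv 0 = LinearMap.mul (ZMod 2) A₂ := rfl
lemma muTriv_one : muTriv 1 = 0 := rfl
lemma muTriv_two : muTriv 2 = 0 := rfl
lemma phiDef_zero : phiDef 0 = LinearMap.id := rfl
lemma phiDef_one : phiDef 1 = phi1 := rfl
lemma phiDef_two : phiDef 2 = 0 := rfl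

lemma phi1_apply (a : A₂) : phi1 a = algebraMap (ZMod 2) A₂ a.snd := rfl

lemma snd_phi1 (a : A₂) : (phi1 a).snd = 0 := by
  simp [phi1_apply, TrivSqZeroExt.algebraMap_eq_inl']

lemma mu2_phi1_left (a b : A₂) : mu2 (phi1 a) b = 0 := by
  simp [mu2_apply, snd_phi1]

lemma mu2_phi1_right (a b : A₂) : mu2 a (phi1 b) = 0 := by
  simp [mu2_apply, snd_phi1]

/-- **The characteristic-2 counterexample** (Remark after Theorem 7.2): over
`A = 𝔽₂[X]/(X²)`, the deformation `m_s(x,x) = s²·1` is a formal one-parameter deformation,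
it is equivalent to the trivial deformation via `X ↦ X + s·1`, and yet its infinitesimal
`μ₂` is a Hochschild 2-cocycle which is not a coboundary. -/
theorem char_two_trivial_deformation_counterexample :
    (mu2 DualNumber.eps DualNumber.eps = 1 ∧ mu2 1 1 = 0 ∧
      mu2 1 DualNumber.eps = 0 ∧ mu2 DualNumber.eps 1 = 0) ∧
    (phi1 1 = 0 ∧ phi1 DualNumber.eps = 1) ∧
    IsFormalDeformation A₂ muDef ∧
    IsEquivalenceOfDeformations A₂ phiDef muTriv muDef ∧
    IsHochschildCocycle A₂ (muDef 2) ∧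
    ¬ IsHochschildCoboundary A₂ (muDef 2) := by
  refine ⟨⟨?_, ?_, ?_, ?_⟩, ⟨?_, ?_⟩, ⟨?_, ?_, ?_⟩, ⟨?_, ?_, ?_⟩, ?_, ?_⟩
  · simp [mu2_apply]
  · simp [mu2_apply]
  · simp [mu2_apply]
  · simp [mu2_apply]
  · simp [phi1_apply]
  · simp [phi1_apply]
  -- deformation: μ₀ is multiplication
  · intro a b; simp [muDef]
  -- deformation: unitality
  · intro n hn a
    rcases eq_or_ne n 2 with rfl | h2
    · constructor <;> simp [muDef, mu2_apply]
    · have h0 : n ≠ 0 := by omega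
      constructor <;> simp [muDef, h0, h2]
  -- deformation: associativity equations
  · intro k hk a b c
    by_cases hk2 : k = 2
    · subst hk2
      simp only [Finset.sum_range_succ, Finset.sum_range_zero]
      norm_num [muDef_zero, muDef_one, muDef_two]
      ext <;>
        simp [mu2_apply, TrivSqZeroExt.snd_mul, TrivSqZeroExt.fst_mul, smul_eq_mul] <;>
        ring_nf
    · by_cases hk4 : k = 4
      · subst hk4
        simp only [Finset.sum_range_succ, Finset.sum_range_zero]
        norm_num [muDef_zero, muDef_one, muDef_two, muDef_three, muDef_four]
        ext <;>
          simp [mu2_apply, TrivSqZeroExt.snd_mul, TrivSqZeroExt.fst_mul, smul_eq_mul] <;>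
          ring_nf
      · have hL : ∀ i ∈ Finset.range (k + 1), muDef i (muDef (k - i) a b) c = 0 := by
          intro i hi
          simp only [Finset.mem_range] at hi
          by_cases h0 : i = 0 ∨ i = 2
          · have h1 : k - i ≠ 0 := by omega
            have h2 : k - i ≠ 2 := by omega
            simp [muDef, h1, h2]
          · push_neg at h0
            simp [muDef, h0.1, h0.2]
        have hR : ∀ i ∈ Finset.range (k + 1), muDef i a (muDef (k - i) b c) = 0 := by
          intro i hi
          simp only [Finset.mem_range] at hi
          by_cases h0 : i = 0 ∨ i = 2
          · have h1 : k - i ≠ 0 := by omega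
            have h2 : k - i ≠ 2 := by omega
            simp [muDef, h1, h2]
          · push_neg at h0
            simp [muDef, h0.1, h0.2]
        rw [Finset.sum_eq_zero hL, Finset.sum_eq_zero hR]
  -- equivalence: φ₀ = id
  · simp [phiDef]
  -- equivalence: φ_n(1) = 0
  · intro n hn
    rcases eq_or_ne n 1 with rfl | h1
    · simp [phiDef, phi1_apply]
    · have h0 : n ≠ 0 := by omega
      simp [phiDef, h0, h1]
  -- equivalence: main equations
  · intro k a b
    by_cases hk : k ≤ 2
    · interval_cases k
      · simp only [Finset.sum_range_succ, Finset.sum_range_zero]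
        norm_num [muDef_zero, muTriv_zero, phiDef_zero]
      · simp only [Finset.sum_range_succ, Finset.sum_range_zero]
        norm_num [muDef_zero, muDef_one, muTriv_zero, muTriv_one, phiDef_zero, phiDef_one]
        ext <;>
          simp [mu2_apply, phi1_apply, TrivSqZeroExt.snd_mul, TrivSqZeroExt.fst_mul,
            smul_eq_mul, TrivSqZeroExt.algebraMap_eq_inl] <;>
          ring_nf <;>
          simp [show (2 : ZMod 2) = 0 from by decide]
      · simp only [Finset.sum_range_succ, Finset.sum_range_zero]
        norm_num [muDef_zero, muDef_one, muDef_two, muTriv_zero, muTriv_one, muTriv_two,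
          phiDef_zero, phiDef_one, phiDef_two]
        ext <;>
          simp [mu2_apply, phi1_apply, TrivSqZeroExt.snd_mul, TrivSqZeroExt.fst_mul,
            smul_eq_mul, TrivSqZeroExt.algebraMap_eq_inl] <;>
          ring_nf <;>
          simp [show (2 : ZMod 2) = 0 from by decide]
    · push_neg at hk
      have hL : ∀ i ∈ Finset.range (k + 1), phiDef i (muTriv (k - i) a b) = 0 := by
        intro i hi
        simp only [Finset.mem_range] at hi
        by_cases h0 : k - i = 0
        · have : i ≠ 0 := by omega
          have : i ≠ 1 := by omega
          simp [phiDef, muTriv, h0, ‹i ≠ 0›, ‹i ≠ 1›]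
        · simp [muTriv, h0]
      have hR : ∀ i ∈ Finset.range (k + 1), ∀ j ∈ Finset.range (k - i + 1),
          muDef i (phiDef j a) (phiDef (k - i - j) b) = 0 := by
        intro i hi j hj
        simp only [Finset.mem_range] at hi hj
        by_cases hi0 : i = 0 ∨ i = 2
        · by_cases hj2 : 2 ≤ j
          · have : j ≠ 0 := by omega
            have : j ≠ 1 := by omega
            simp [phiDef, ‹j ≠ 0›, ‹j ≠ 1›]
          · by_cases hl2 : 2 ≤ k - i - j
            · have : k - i - j ≠ 0 := by omega
              have : k - i - j ≠ 1 := by omega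
              simp [phiDef, ‹k - i - j ≠ 0›, ‹k - i - j ≠ 1›]
            · -- i ∈ {0,2}, j ≤ 1, k-i-j ≤ 1, k ≥ 3 ⟹ i = 2 and (j = 1 ∨ k-i-j = 1)
              have hi2 : i = 2 := by omega
              subst hi2
              rcases (by omega : j = 1 ∨ (j = 0 ∧ k - 2 - j = 1)) with hj1 | ⟨hj0, hl1⟩
              · subst hj1
                simp [muDef, phiDef, mu2_phi1_left]
              · subst hj0
                rw [hl1]
                simp [muDef, phiDef, mu2_phi1_right]
        · push_neg at hi0
          simp [muDef, hi0.1, hi0.2]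
      rw [Finset.sum_eq_zero hL, Finset.sum_eq_zero (fun i hi => Finset.sum_eq_zero (hR i hi))]
  -- cocycle
  · intro a b c
    show a * muDef 2 b c - muDef 2 (a * b) c + muDef 2 a (b * c) - muDef 2 a b * c = 0
    rw [muDef_two]
    ext <;>
      simp [mu2_apply, TrivSqZeroExt.snd_mul, TrivSqZeroExt.fst_mul, smul_eq_mul] <;>
      ring_nf
  -- not a coboundary
  · rintro ⟨ξ, h⟩
    have h1 := h DualNumber.eps DualNumber.eps
    rw [muDef_two] at h1
    have h2 := congrArg TrivSqZeroExt.fst h1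
    simp [mu2_apply, TrivSqZeroExt.fst_mul, DualNumber.eps_mul_eps, DualNumber.fst_eps, DualNumber.snd_eps] at h2
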